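/- arXiv:0710.5360 — 2 statements merged into one kernel-verified Lean document; each statement's English description precedes it below -/
import Mathlib

section
/- Σ_{n=1}^{∞} H_n / n² = 2ζ(3), where H_n = Σ_{k=1}^n 1/k is the n-th harmonic number and ζ is the Riemann zeta function. -/
/-- The n-th harmonic number `H_n = ∑_{k=1}^n 1/k`. -/
noncomputable def H (n : ℕ) : ℝ := ∑ k ∈ Finset.Icc 1 n, (1 : ℝ) / k

/-!
Euler's argument: the double series `D = ∑_{a,b ≥ 1} 1 / (a b (a + b))` is evaluated in two ways.
Summing over `b` first, `1 / (b (a + b)) = (1 / b - 1 / (a + b)) / a` telescopes to `H_a / a`, so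
`D = ∑ H_a / a²`. On the other hand `1 / (a b (a + b)) = 1 / (a (a + b)²) + 1 / (b (a + b)²)`, and
summing the first half along the lines `a + b = n` gives
`D = 2 ∑ H_{n-1} / n² = 2 (∑ H_n / n² - ζ(3))`.
Convergence of `∑ H_n / n²` comes from `H_n ≤ 1 + log n`.
-/

open Filter Topology Finset

theorem HasSum.sum_antidiagonal {α A : Type*} [AddCommMonoid α] [TopologicalSpace α]
    [ContinuousAdd α] [RegularSpace α] [AddCommMonoid A] [HasAntidiagonal A]
    {f : A × A → α} {a : α} (hf : HasSum f a) :
    HasSum (fun n ↦ ∑ p ∈ antidiagonal n, f p) a := by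
  refine (HasAntidiagonal.sigmaAntidiagonalEquivProd.hasSum_iff.mpr hf).sigma fun n ↦ ?_
  exact (antidiagonal n).hasSum f

theorem Finset.sum_range_sub_shift {G : Type*} [AddCommGroup G] (f : ℕ → G) (m n : ℕ) :
    ∑ k ∈ range n, (f k - f (k + m)) = ∑ i ∈ range m, (f i - f (n + i)) := by
  have h₁ := sum_range_add f n m
  have h₂ := sum_range_add f m n
  rw [add_comm n m] at h₁
  simp only [sum_sub_distrib, add_comm _ m]
  rw [sub_eq_sub_iff_add_eq_add, ← h₁, h₂]

theorem hasSum_sub_shift {f : ℕ → ℝ} (hf : Antitone f) (hf0 : Tendsto f atTop (𝓝 0)) (m : ℕ) :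
    HasSum (fun k ↦ f k - f (k + m)) (∑ i ∈ range m, f i) := by
  rw [hasSum_iff_tendsto_nat_of_nonneg (fun k ↦ sub_nonneg.2 (hf (k.le_add_right m)))]
  simp_rw [sum_range_sub_shift]
  have h : ∀ i ∈ range m, Tendsto (fun n ↦ f i - f (n + i)) atTop (𝓝 (f i - 0)) := fun i _ ↦
    tendsto_const_nhds.sub (hf0.comp (tendsto_add_atTop_nat i))
  simpa using tendsto_finsetSum _ h

lemma H_eq_harmonic (n : ℕ) : H n = harmonic n := by
  rw [H, harmonic_eq_sum_Icc]; push_cast; simp [one_div]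

lemma H_eq_sum_range (n : ℕ) : H n = ∑ i ∈ range n, 1 / ((i : ℝ) + 1) := by
  rw [H_eq_harmonic, harmonic]; push_cast; simp [one_div]

lemma H_succ (n : ℕ) : H (n + 1) = H n + 1 / ((n : ℝ) + 1) := by
  simp only [H_eq_sum_range, sum_range_succ]

lemma H_nonneg (n : ℕ) : 0 ≤ H n := by
  rw [H_eq_sum_range]; positivity

lemma H_succ_le_rpow (n : ℕ) : H (n + 1) ≤ 3 * ((n : ℝ) + 1) ^ (1 / 2 : ℝ) := by
  have hlog := Real.log_le_rpow_div (x := (n : ℝ) + 1) (by positivity) (by norm_num : (0 : ℝ) < 1 / 2)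
  have hone : 1 ≤ ((n : ℝ) + 1) ^ (1 / 2 : ℝ) := Real.one_le_rpow (by simp) (by norm_num)
  have := harmonic_le_one_add_log (n + 1)
  push_cast at this
  rw [H_eq_harmonic]; linarith

lemma summable_H_succ_div_sq : Summable fun n : ℕ ↦ H (n + 1) / ((n : ℝ) + 1) ^ 2 := by
  have hp : Summable fun n : ℕ ↦ 3 * ((n : ℝ) + 1) ^ (-(3 / 2) : ℝ) := by
    refine .mul_left 3 ?_
    exact_mod_cast (summable_nat_add_iff 1).2
      (Real.summable_nat_rpow.2 (by norm_num : -(3 / 2 : ℝ) < -1))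
  refine hp.of_nonneg_of_le (fun n ↦ by have := H_nonneg (n + 1); positivity) fun n ↦ ?_
  have hx : (0 : ℝ) < n + 1 := by positivity
  calc H (n + 1) / ((n : ℝ) + 1) ^ 2 ≤ 3 * ((n : ℝ) + 1) ^ (1 / 2 : ℝ) / ((n : ℝ) + 1) ^ 2 := by
        gcongr; exact H_succ_le_rpow n
    _ = 3 * ((n : ℝ) + 1) ^ (-(3 / 2) : ℝ) := by
        rw [mul_div_assoc, ← Real.rpow_two, ← Real.rpow_sub hx]; norm_num

lemma hasSum_one_div_mul_add (m : ℕ) (hm : 0 < m) :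
    HasSum (fun k : ℕ ↦ 1 / (((k : ℝ) + 1) * (k + m + 1))) (H m / m) := by
  have hf : Antitone fun k : ℕ ↦ 1 / ((k : ℝ) + 1) := fun a b hab ↦ by
    dsimp only; gcongr
  have := (hasSum_sub_shift hf tendsto_one_div_add_atTop_nhds_zero_nat m).div_const m
  rw [← H_eq_sum_range] at this
  refine this.congr_fun fun k ↦ ?_
  have : (m : ℝ) ≠ 0 := by positivity
  push_cast
  field_simp
  ring

/-- `1 / (a b (a + b))` at `(a, b) = (p.1 + 1, p.2 + 1)`. -/
noncomputable def eulerTerm (p : ℕ × ℕ) : ℝ :=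
  1 / (((p.1 : ℝ) + 1) * ((p.2 : ℝ) + 1) * ((p.1 : ℝ) + p.2 + 2))

noncomputable def eulerHalfTerm (p : ℕ × ℕ) : ℝ :=
  1 / (((p.1 : ℝ) + 1) * ((p.1 : ℝ) + p.2 + 2) ^ 2)

lemma eulerTerm_nonneg (p : ℕ × ℕ) : 0 ≤ eulerTerm p := by unfold eulerTerm; positivity

lemma eulerHalfTerm_nonneg (p : ℕ × ℕ) : 0 ≤ eulerHalfTerm p := by unfold eulerHalfTerm; positivity

lemma eulerTerm_eq_add_swap (p : ℕ × ℕ) : eulerTerm p = eulerHalfTerm p + eulerHalfTerm p.swap := by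
  unfold eulerTerm eulerHalfTerm
  simp only [Prod.fst_swap, Prod.snd_swap]
  field_simp
  ring

lemma eulerHalfTerm_le (p : ℕ × ℕ) : eulerHalfTerm p ≤ eulerTerm p := by
  rw [eulerTerm_eq_add_swap]
  exact le_add_of_nonneg_right (eulerHalfTerm_nonneg _)

lemma hasSum_eulerTerm_snd (a : ℕ) :
    HasSum (fun b ↦ eulerTerm (a, b)) (H (a + 1) / ((a : ℝ) + 1) ^ 2) := by
  have := (hasSum_one_div_mul_add (a + 1) a.succ_pos).div_const ((a : ℝ) + 1)
  push_cast at this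
  rw [sq, ← div_div]
  refine this.congr_fun fun b ↦ ?_
  unfold eulerTerm
  field_simp
  ring

lemma summable_eulerTerm : Summable eulerTerm := by
  refine (summable_prod_of_nonneg eulerTerm_nonneg).2
    ⟨fun a ↦ (hasSum_eulerTerm_snd a).summable, ?_⟩
  simpa only [fun a ↦ (hasSum_eulerTerm_snd a).tsum_eq] using summable_H_succ_div_sq

lemma hasSum_eulerTerm : HasSum eulerTerm (∑' n : ℕ, H (n + 1) / ((n : ℝ) + 1) ^ 2) := by
  rw [summable_eulerTerm.hasSum_iff, summable_eulerTerm.tsum_prod]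
  exact tsum_congr fun a ↦ (hasSum_eulerTerm_snd a).tsum_eq

lemma sum_antidiagonal_eulerHalfTerm (n : ℕ) :
    ∑ p ∈ antidiagonal n, eulerHalfTerm p = H (n + 1) / ((n : ℝ) + 2) ^ 2 := by
  rw [Nat.sum_antidiagonal_eq_sum_range_succ_mk, H_eq_sum_range, sum_div]
  refine sum_congr rfl fun i hi ↦ ?_
  have : ((i : ℝ) + (n - i : ℕ) + 2) = n + 2 := by
    rw [Nat.cast_sub (Nat.lt_succ_iff.1 (mem_range.1 hi))]; ring
  rw [eulerHalfTerm, this, div_div]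

lemma hasSum_H_succ_div_sq {T : ℝ} (hT : HasSum (fun n : ℕ ↦ H (n + 1) / ((n : ℝ) + 2) ^ 2) T) :
    HasSum (fun n : ℕ ↦ H (n + 1) / ((n : ℝ) + 1) ^ 2) (∑' n : ℕ, 1 / ((n : ℝ) + 1) ^ 3 + T) := by
  have hzeta : Summable fun n : ℕ ↦ 1 / ((n : ℝ) + 1) ^ 3 := by
    exact_mod_cast (summable_nat_add_iff 1).2
      (Real.summable_one_div_nat_pow.2 (by norm_num : 1 < 3))
  have hH : HasSum (fun n : ℕ ↦ H n / ((n : ℝ) + 1) ^ 2) T := by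
    rw [← hasSum_nat_add_iff' 1]
    simpa [add_assoc, one_add_one_eq_two, H_eq_sum_range 0] using hT
  refine (hzeta.hasSum.add hH).congr_fun fun n ↦ ?_
  rw [H_succ]
  field_simp
  ring

theorem tsum_H_succ_div_sq :
    ∑' n : ℕ, H (n + 1) / ((n : ℝ) + 1) ^ 2 = 2 * ∑' n : ℕ, 1 / ((n : ℝ) + 1) ^ 3 := by
  have hD := hasSum_eulerTerm
  have hT := (summable_eulerTerm.of_nonneg_of_le eulerHalfTerm_nonneg eulerHalfTerm_le).hasSum
  have h2T : HasSum eulerTerm (2 * ∑' p, eulerHalfTerm p) := by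
    have := hT.add ((Equiv.prodComm ℕ ℕ).hasSum_iff.2 hT)
    rw [← two_mul] at this
    exact this.congr_fun eulerTerm_eq_add_swap
  have hS := hT.sum_antidiagonal
  simp only [sum_antidiagonal_eulerHalfTerm] at hS
  linarith [hD.unique h2T, (hasSum_H_succ_div_sq hS).tsum_eq]

theorem stmt_5 :
    ((∑' n : ℕ, H (n + 1) / ((n : ℝ) + 1) ^ 2 : ℝ) : ℂ) = 2 * riemannZeta 3 := by
  rw [tsum_H_succ_div_sq, zeta_eq_tsum_one_div_nat_add_one_cpow (by norm_num)]
  simp [Complex.ofReal_tsum]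
end

section
/- ∫₀¹ (log u)/(1-u) · Li₂(-(1-u)/u) du = (17/4)·ζ(4), where Li₂ is the dilogarithm and ζ is the Riemann zeta function. -/
/-!
For `v > 0`, differentiating shows the Landen-type identity
`Li₂(1 - 1/v) + Li₂(1 - v) = -(log v)²/2`, and `-(1 - u)/u = 1 - 1/u`, so the integral equals
`-∫₀¹ log u/(1-u) · Li₂(1-u) du + ½ ∫₀¹ (-log u)³/(1-u) du`.
Since `d/du Li₂(1-u) = log u/(1-u)`, the first integral is `-Li₂(1)²/2`.
Expanding `1/(1-u)` geometrically and using `∫₀¹ (-log u)ᵏ uⁿ du = k!/(n+1)ᵏ⁺¹` (substitute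
`u = e⁻ᵗ`) gives `∫₀¹ (-log u)ᵏ/(1-u) du = k! ζ(k+1)`; with `k = 1` this is `Li₂(1) = ζ(2)`,
with `k = 3` it is `6 ζ(4)`. Hence the value is `ζ(2)²/2 + 3 ζ(4) = (5/4 + 3) ζ(4)`,
as `ζ(2)² = 5/2 · ζ(4)`.
-/

/-- The dilogarithm, defined by `Li₂(x) = -∫₀ˣ log(1-s)/s ds`. -/
noncomputable def Li2 (x : ℝ) : ℝ := -∫ s in (0:ℝ)..x, Real.log (1 - s) / s

open Real MeasureTheory Set
open scoped Nat

lemma image_exp_neg_Ioi_zero : (fun t : ℝ => exp (-t)) '' Ioi 0 = Ioo 0 1 := by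
  ext u
  constructor
  · rintro ⟨t, ht, rfl⟩
    exact ⟨exp_pos _, exp_lt_one_iff.mpr (neg_lt_zero.mpr ht)⟩
  · rintro ⟨hu0, hu1⟩
    exact ⟨-log u, neg_pos.mpr (log_neg hu0 hu1), by simp [exp_log hu0]⟩

lemma integral_neg_log_pow_mul_pow (k n : ℕ) :
    ∫ u in Ioo (0:ℝ) 1, (-log u) ^ k * u ^ n = k ! / ((n:ℝ) + 1) ^ (k + 1) := by
  have hderiv : ∀ t ∈ Ioi (0:ℝ),
      HasDerivWithinAt (fun t => exp (-t)) (-exp (-t)) (Ioi 0) t := fun t _ => by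
    simpa using ((hasDerivAt_neg t).exp).hasDerivWithinAt
  have hinj : InjOn (fun t : ℝ => exp (-t)) (Ioi 0) := (exp_injective.comp neg_injective).injOn
  rw [← image_exp_neg_Ioi_zero,
    integral_image_eq_integral_abs_deriv_smul measurableSet_Ioi hderiv hinj]
  have hn : (0:ℝ) < n + 1 := by positivity
  calc ∫ t in Ioi 0, |-exp (-t)| • ((-log (exp (-t))) ^ k * exp (-t) ^ n)
      = ∫ t in Ioi 0, t ^ ((k + 1 : ℝ) - 1) * exp (-((n + 1) * t)) := by
        refine setIntegral_congr_fun measurableSet_Ioi fun t _ => ?_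
        rw [abs_neg, abs_of_pos (exp_pos _), log_exp, neg_neg, add_sub_cancel_right,
          rpow_natCast, smul_eq_mul, ← exp_nat_mul, mul_left_comm, ← exp_add]
        ring_nf
    _ = k ! / ((n:ℝ) + 1) ^ (k + 1) := by
        rw [integral_rpow_mul_exp_neg_mul_Ioi (by positivity) hn, Gamma_nat_eq_factorial,
          show (k + 1 : ℝ) = (k + 1 : ℕ) by push_cast; rfl, rpow_natCast, div_pow, one_pow]
        field_simp

lemma hasSum_one_div_add_one_pow {p : ℕ} (hp : p ≠ 0) {s : ℝ}
    (hs : HasSum (fun n : ℕ => 1 / (n:ℝ) ^ p) s) :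
    HasSum (fun n : ℕ => 1 / ((n:ℝ) + 1) ^ p) s := by
  simpa [zero_pow hp] using (hasSum_nat_add_iff' 1).mpr hs

lemma hasSum_integral_neg_log_pow_div_one_sub {k : ℕ} (hk : k ≠ 0) :
    HasSum (fun n : ℕ => (k ! : ℝ) / ((n:ℝ) + 1) ^ (k + 1))
      (∫ u in Ioo (0:ℝ) 1, (-log u) ^ k / (1 - u)) := by
  have hF_int : ∀ n : ℕ, IntegrableOn (fun u => (-log u) ^ k * u ^ n) (Ioo 0 1) := fun n =>
    -- a non-integrable function has Bochner integral `0`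
    Integrable.of_integral_ne_zero (by rw [integral_neg_log_pow_mul_pow]; positivity)
  have hF_norm : ∀ n : ℕ, ∫ u in Ioo (0:ℝ) 1, ‖(-log u) ^ k * u ^ n‖
      = k ! / ((n:ℝ) + 1) ^ (k + 1) := fun n => by
    rw [← integral_neg_log_pow_mul_pow]
    refine setIntegral_congr_fun measurableSet_Ioo fun u hu => norm_of_nonneg ?_
    exact mul_nonneg (pow_nonneg (neg_nonneg.mpr (log_nonpos hu.1.le hu.2.le)) k)
      (pow_nonneg hu.1.le n)
  have hsummable : Summable fun n : ℕ => (k ! : ℝ) / ((n:ℝ) + 1) ^ (k + 1) := by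
    refine (((summable_nat_add_iff 1).mpr
      (summable_one_div_nat_pow (p := k + 1).mpr (by omega))).mul_left (k ! : ℝ)).congr fun n => ?_
    push_cast
    ring
  have hsum := hasSum_integral_of_summable_integral_norm hF_int
    (by simpa only [hF_norm] using hsummable)
  rw [funext (integral_neg_log_pow_mul_pow k)] at hsum
  have hgeom : ∀ u ∈ Ioo (0:ℝ) 1, (-log u) ^ k / (1 - u) = ∑' n : ℕ, (-log u) ^ k * u ^ n :=
    fun u hu => by rw [tsum_mul_left, tsum_geometric_of_lt_one hu.1.le hu.2, div_eq_mul_inv]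
  rwa [setIntegral_congr_fun measurableSet_Ioo hgeom]

lemma intervalIntegrable_neg_log_pow_div_one_sub {k : ℕ} (hk : k ≠ 0) :
    IntervalIntegrable (fun u => (-log u) ^ k / (1 - u)) volume 0 1 := by
  have h := hasSum_integral_neg_log_pow_div_one_sub hk
  rw [intervalIntegrable_iff_integrableOn_Ioo_of_le zero_le_one]
  refine Integrable.of_integral_ne_zero (h.tsum_eq ▸ (h.summable.tsum_pos ?_ 0 ?_).ne') <;>
    intros <;> positivity

lemma integral_neg_log_pow_div_one_sub {k : ℕ} (hk : k ≠ 0) {s : ℝ}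
    (hs : HasSum (fun n : ℕ => 1 / (n:ℝ) ^ (k + 1)) s) :
    ∫ u in (0:ℝ)..1, (-log u) ^ k / (1 - u) = k ! * s := by
  rw [intervalIntegral.integral_of_le zero_le_one, integral_Ioc_eq_integral_Ioo]
  refine (hasSum_integral_neg_log_pow_div_one_sub hk).unique ?_
  simpa only [mul_one_div] using (hasSum_one_div_add_one_pow (by omega) hs).mul_left (k ! : ℝ)

lemma intervalIntegrable_log_div_one_sub :
    IntervalIntegrable (fun u => log u / (1 - u)) volume 0 1 := by
  simpa [neg_div, Pi.neg_def] using (intervalIntegrable_neg_log_pow_div_one_sub one_ne_zero).neg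

lemma measurable_log_one_sub_div : Measurable fun s : ℝ => log (1 - s) / s := by fun_prop

lemma abs_log_one_sub_div_le_one {s : ℝ} (hs : s ≤ 0) : |log (1 - s) / s| ≤ 1 := by
  rcases hs.eq_or_lt with rfl | hs
  · simp
  have h0 : 0 ≤ log (1 - s) := log_nonneg (by linarith)
  have h1 : log (1 - s) ≤ -s := by linarith [log_le_sub_one_of_pos (x := 1 - s) (by linarith)]
  rw [abs_div, abs_of_nonneg h0, abs_of_neg hs, div_le_one (by linarith)]
  exact h1

lemma intervalIntegrable_log_one_sub_div {a b : ℝ} (ha : a ≤ 1) (hb : b ≤ 1) :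
    IntervalIntegrable (fun s => log (1 - s) / s) volume a b := by
  set c := min (min a b) 0
  have hneg : IntervalIntegrable (fun s => log (1 - s) / s) volume c 0 := by
    refine IntervalIntegrable.mono_fun' (g := fun _ => 1) intervalIntegrable_const ?_ ?_
    · exact measurable_log_one_sub_div.aestronglyMeasurable
    · rw [uIoc_of_le (min_le_right _ _)]
      exact (ae_restrict_iff' measurableSet_Ioc).mpr
        (Filter.Eventually.of_forall fun s hs => abs_log_one_sub_div_le_one hs.2)
  have hpos : IntervalIntegrable (fun s => log (1 - s) / s) volume 0 1 := by
    simpa using (intervalIntegrable_log_div_one_sub.comp_sub_left 1).symm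
  refine (hneg.trans hpos).mono_set ?_
  rw [uIcc_of_le ((min_le_right (min a b) 0).trans zero_le_one)]
  exact uIcc_subset_Icc ⟨(min_le_left _ _).trans (min_le_left _ _), ha⟩
    ⟨(min_le_left _ _).trans (min_le_right _ _), hb⟩

lemma Li2_zero : Li2 0 = 0 := by simp [Li2]

lemma Li2_one : Li2 1 = π ^ 2 / 6 := by
  have h := integral_neg_log_pow_div_one_sub one_ne_zero hasSum_zeta_two
  have hsub : ∫ s in (0:ℝ)..1, log (1 - s) / s = ∫ u in (0:ℝ)..1, log u / (1 - u) := by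
    simpa using
      intervalIntegral.integral_comp_sub_left (a := 0) (b := 1) (fun u => log u / (1 - u)) 1
  simpa [Li2, hsub, neg_div, intervalIntegral.integral_neg] using h

lemma hasDerivAt_Li2 {x : ℝ} (hx1 : x < 1) (hx0 : x ≠ 0) :
    HasDerivAt Li2 (-(log (1 - x) / x)) x :=
  (intervalIntegral.integral_hasDerivAt_right
    (intervalIntegrable_log_one_sub_div zero_le_one hx1.le)
    measurable_log_one_sub_div.stronglyMeasurable.stronglyMeasurableAtFilter
    (by fun_prop (disch := grind))).neg

lemma continuousOn_Li2 : ContinuousOn Li2 (Iic 1) := by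
  intro x hx
  set a := min x 0 - 1
  have ha0 : a ≤ 0 := by linarith [min_le_right x 0]
  have hax : a < x := by linarith [min_le_left x 0]
  have hIcc : ContinuousOn Li2 (Icc a 1) := by
    have h0 : (0:ℝ) ∈ uIcc a 1 := by
      rw [uIcc_of_le (by linarith)]
      exact ⟨ha0, zero_le_one⟩
    have := (intervalIntegral.continuousOn_primitive_interval'
      (intervalIntegrable_log_one_sub_div (by linarith) le_rfl) h0).neg
    rwa [uIcc_of_le (by linarith)] at this
  have hnhds : Icc a 1 ∈ nhdsWithin x (Iic 1) :=
    Filter.mem_of_superset (inter_mem_nhdsWithin (Iic 1) (Ioi_mem_nhds hax))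
      fun y hy => ⟨hy.2.le, hy.1⟩
  exact (hIcc.continuousWithinAt ⟨hax.le, hx⟩).mono_of_mem_nhdsWithin hnhds

lemma hasDerivAt_Li2_one_sub {x : ℝ} (hx0 : 0 < x) (hx1 : x ≠ 1) :
    HasDerivAt (fun v => Li2 (1 - v)) (log x / (1 - x)) x := by
  simpa using
    (hasDerivAt_Li2 (x := 1 - x) (by linarith) (sub_ne_zero.mpr hx1.symm)).comp_const_sub 1 x

lemma hasDerivAt_Li2_one_sub_inv_add_Li2_one_sub {x : ℝ} (hx0 : 0 < x) (hx1 : x ≠ 1) :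
    HasDerivAt (fun v => Li2 (1 - v⁻¹) + Li2 (1 - v) + log v ^ 2 / 2) 0 x := by
  have h1 := (hasDerivAt_Li2_one_sub (inv_pos.mpr hx0) (inv_ne_one.mpr hx1)).comp x
    (hasDerivAt_inv hx0.ne')
  have h2 := hasDerivAt_Li2_one_sub hx0 hx1
  have h3 := ((hasDerivAt_log hx0.ne').pow 2).div_const 2
  refine ((h1.add h2).add h3).congr_deriv ?_
  have : 1 - x ≠ 0 := sub_ne_zero.mpr hx1.symm
  rw [log_inv]
  field_simp
  ring

lemma Li2_one_sub_inv_add_Li2_one_sub_of_le_one {v : ℝ} (hv0 : 0 < v) (hv1 : v ≤ 1) :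
    Li2 (1 - v⁻¹) + Li2 (1 - v) = -(log v ^ 2 / 2) := by
  have hcont : ContinuousOn (fun w => Li2 (1 - w⁻¹) + Li2 (1 - w) + log w ^ 2 / 2) (Icc v 1) := by
    have hw0 : ∀ w ∈ Icc v 1, w ≠ 0 := fun w hw => (hv0.trans_le hw.1).ne'
    refine ((continuousOn_Li2.comp (by fun_prop (disch := exact hw0)) fun w hw => ?_).add
      (continuousOn_Li2.comp (by fun_prop) fun w hw => ?_)).add (by fun_prop (disch := exact hw0))
    · simpa using (hv0.trans_le hw.1).le
    · simpa using (hv0.trans_le hw.1).le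
  have hderiv : ∀ x ∈ Ico v 1, HasDerivWithinAt
      (fun w => Li2 (1 - w⁻¹) + Li2 (1 - w) + log w ^ 2 / 2) 0 (Ici x) x := fun x hx =>
    (hasDerivAt_Li2_one_sub_inv_add_Li2_one_sub (hv0.trans_le hx.1) hx.2.ne).hasDerivWithinAt
  have := constant_of_has_deriv_right_zero hcont hderiv 1 ⟨hv1, le_rfl⟩
  simp only [inv_one, sub_self, Li2_zero, log_one] at this
  linarith

lemma Li2_one_sub_inv_add_Li2_one_sub {v : ℝ} (hv : 0 < v) :
    Li2 (1 - v⁻¹) + Li2 (1 - v) = -(log v ^ 2 / 2) := by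
  rcases le_total v 1 with hv1 | hv1
  · exact Li2_one_sub_inv_add_Li2_one_sub_of_le_one hv hv1
  · have := Li2_one_sub_inv_add_Li2_one_sub_of_le_one (inv_pos.mpr hv)
      (inv_le_one_of_one_le₀ hv1)
    rwa [inv_inv, add_comm, log_inv, neg_sq] at this

lemma continuousOn_Li2_one_sub : ContinuousOn (fun u => Li2 (1 - u)) (Ici 0) :=
  continuousOn_Li2.comp (by fun_prop) fun u hu => by simpa using hu

lemma intervalIntegrable_log_div_one_sub_mul_Li2_one_sub :
    IntervalIntegrable (fun u => log u / (1 - u) * Li2 (1 - u)) volume 0 1 := by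
  refine intervalIntegrable_log_div_one_sub.mul_continuousOn (continuousOn_Li2_one_sub.mono ?_)
  rw [uIcc_of_le zero_le_one]
  exact Icc_subset_Ici_self

lemma integral_log_div_one_sub_mul_Li2_one_sub :
    ∫ u in (0:ℝ)..1, log u / (1 - u) * Li2 (1 - u) = -(π ^ 2 / 6) ^ 2 / 2 := by
  have hcont : ContinuousOn (fun u => Li2 (1 - u) ^ 2 / 2) (Icc 0 1) :=
    ((continuousOn_Li2_one_sub.mono Icc_subset_Ici_self).pow 2).div_const 2
  have hderiv : ∀ x ∈ Ioo (0:ℝ) 1, HasDerivAt (fun u => Li2 (1 - u) ^ 2 / 2)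
      (log x / (1 - x) * Li2 (1 - x)) x := fun x hx =>
    (((hasDerivAt_Li2_one_sub hx.1 hx.2.ne).pow 2).div_const 2).congr_deriv (by ring)
  rw [intervalIntegral.integral_eq_sub_of_hasDerivAt_of_le zero_le_one hcont hderiv
    intervalIntegrable_log_div_one_sub_mul_Li2_one_sub]
  simp [Li2_one, Li2_zero]
  ring

theorem stmt_16 :
    ((∫ u in (0:ℝ)..1, Real.log u / (1 - u) * Li2 (-(1 - u) / u) : ℝ) : ℂ) =
      (17 / 4) * riemannZeta 4 := by
  have hA : IntervalIntegrable (fun u => -(log u / (1 - u) * Li2 (1 - u))) volume 0 1 :=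
    intervalIntegrable_log_div_one_sub_mul_Li2_one_sub.neg
  have hB := intervalIntegrable_neg_log_pow_div_one_sub (k := 3) (by norm_num)
  have hsplit : EqOn (fun u => log u / (1 - u) * Li2 (-(1 - u) / u))
      (fun u => -(log u / (1 - u) * Li2 (1 - u)) + (-log u) ^ 3 / (1 - u) / 2) (uIcc 0 1) := by
    intro u hu
    rw [uIcc_of_le zero_le_one] at hu
    rcases hu.1.eq_or_lt with rfl | hu0
    · simp
    have hLanden := Li2_one_sub_inv_add_Li2_one_sub hu0
    dsimp only
    rw [show -(1 - u) / u = 1 - u⁻¹ by field_simp; ring, eq_sub_of_add_eq hLanden]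
    ring
  have hval : ∫ u in (0:ℝ)..1, log u / (1 - u) * Li2 (-(1 - u) / u) = 17 * π ^ 4 / 360 := by
    rw [intervalIntegral.integral_congr hsplit,
      intervalIntegral.integral_add hA (hB.div_const 2), intervalIntegral.integral_neg,
      intervalIntegral.integral_div,
      integral_log_div_one_sub_mul_Li2_one_sub,
      integral_neg_log_pow_div_one_sub (by norm_num) hasSum_zeta_four]
    norm_num
    ring
  rw [hval, riemannZeta_four]
  push_cast
  ring
end
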